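/- Let G be a totally disconnected locally compact group and Ω a discrete left G-set with compact open point stabilizers. Then the permutation module Q[Ω] is a projective object in the category of discrete Q[G]-modules. Consequently, the category of discrete Q[G]-modules has enough projectives. -/

import Mathlib

universe u

/-- A discrete `ℚ[G]`-module over a topological group `G`: a `ℚ`-vector space with
a `ℚ`-linear `G`-action in which every element has open stabilizer. -/
structure DiscGMod (G : Type u) [Group G] [TopologicalSpace G] : Type (u + 1) where
  carrier : Type u
  [acg : AddCommGroup carrier]
  [mod : Module ℚ carrier]
  [act : DistribMulAction G carrier]
  [cmm : SMulCommClass G ℚ carrier]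
  discrete : ∀ m : carrier, IsOpen ((MulAction.stabilizer G m : Subgroup G) : Set G)

attribute [instance] DiscGMod.acg DiscGMod.mod DiscGMod.act DiscGMod.cmm

/-- A morphism of discrete `ℚ[G]`-modules is a `G`-equivariant `ℚ`-linear map. -/
def DiscGMod.Equivariant {G : Type u} [Group G] [TopologicalSpace G]
    {A B : DiscGMod G} (f : A.carrier →ₗ[ℚ] B.carrier) : Prop :=
  ∀ (g : G) (a : A.carrier), f (g • a) = g • f a

/-- Projectivity, relative to the category of discrete `ℚ[G]`-modules, of a
`ℚ`-module `P` equipped with a `G`-action `σ`: every equivariant map from `P` to a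
discrete module lifts along every equivariant surjection of discrete modules. -/
def ProjOverDiscrete (G : Type u) [Group G] [TopologicalSpace G]
    (P : Type u) [AddCommGroup P] [Module ℚ P] (σ : G → P → P) : Prop :=
  ∀ (A B : DiscGMod G) (π : B.carrier →ₗ[ℚ] A.carrier),
    DiscGMod.Equivariant π → Function.Surjective π →
    ∀ φ : P →ₗ[ℚ] A.carrier, (∀ (g : G) (x : P), φ (σ g x) = g • φ x) →
    ∃ ψ : P →ₗ[ℚ] B.carrier, (∀ (g : G) (x : P), ψ (σ g x) = g • ψ x) ∧ π.comp ψ = φ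

/-!
An equivariant ℚ-linear map out of `ℚ[Ω]` is an equivariant map out of `Ω`, and such a map is
freely determined by its values on orbit representatives `ω`, subject only to each value being
fixed by the stabilizer `G_ω`. To lift along a surjection `B → A`, lift the value at `ω` to any
`b₀` and average `b₀` over its `G_ω`-orbit: that orbit is finite because `G_ω` is compact and `b₀`
has open stabilizer, and dividing by its size is possible over `ℚ`.

For enough projectives, van Dantzig's theorem gives a compact open subgroup `U_m ≤ G_m` for each
`m ∈ M`, and `⨁ₘ ℚ[G ⧸ U_m] → M`, `g U_m ↦ g • m`, is an equivariant surjection.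
-/

open scoped Pointwise
open Set Filter Topology MulAction

theorem Subgroup.exists_isOpen_isCompact_subset_of_isCompact_isOpen {G : Type*} [Group G]
    [TopologicalSpace G] [IsTopologicalGroup G] {W : Set G} (hWc : IsCompact W)
    (hWo : IsOpen W) (hW1 : (1 : G) ∈ W) :
    ∃ H : Subgroup G, IsOpen (H : Set G) ∧ IsCompact (H : Set G) ∧ (H : Set G) ⊆ W := by
  obtain ⟨V, hV, hWV⟩ := compact_open_separated_mul_right hWc hWo subset_rfl
  set H := Subgroup.closure (V ∩ V⁻¹)
  have hWH : ∀ h ∈ H, ∀ w ∈ W, w * h ∈ W := by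
    intro h hh
    induction hh using Subgroup.closure_induction'' with
    | mem x hx => exact fun w hw => hWV (mul_mem_mul hw hx.1)
    | inv_mem x hx => exact fun w hw => hWV (mul_mem_mul hw hx.2)
    | one => simp
    | mul x y _ _ hx hy => exact fun w hw => mul_assoc w x y ▸ hy _ (hx w hw)
  have hHW : (H : Set G) ⊆ W := fun h hh => one_mul h ▸ hWH h hh 1 hW1
  have hHo : IsOpen (H : Set G) :=
    H.isOpen_of_mem_nhds (mem_of_superset (inter_mem hV (inv_mem_nhds_one G hV))
      Subgroup.subset_closure)
  exact ⟨H, hHo, hWc.of_isClosed_subset (H.isClosed_of_isOpen hHo) hHW, hHW⟩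

theorem exists_isOpen_isCompact_subgroup_subset {G : Type*} [Group G] [TopologicalSpace G]
    [IsTopologicalGroup G] [TotallyDisconnectedSpace G] [LocallyCompactSpace G]
    {V : Set G} (hV : V ∈ 𝓝 (1 : G)) :
    ∃ H : Subgroup G, IsOpen (H : Set G) ∧ IsCompact (H : Set G) ∧ (H : Set G) ⊆ V := by
  obtain ⟨K, hK, hKV, hKc⟩ := local_compact_nhds hV
  obtain ⟨W, hW, hW1, hWK⟩ := loc_compact_Haus_tot_disc_of_zero_dim.mem_nhds_iff.1 hK
  obtain ⟨H, hHo, hHc, hHW⟩ := Subgroup.exists_isOpen_isCompact_subset_of_isCompact_isOpen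
    (hKc.of_isClosed_subset hW.1 hWK) hW.2 hW1
  exact ⟨H, hHo, hHc, hHW.trans (hWK.trans hKV)⟩

section GroupAction

variable {G X Y : Type*} [Group G] [MulAction G X] [MulAction G Y]

theorem MulAction.smul_eq_smul_of_stabilizer_le {x : X} {y : Y}
    (hxy : stabilizer G x ≤ stabilizer G y) {g g' : G} (h : g • x = g' • x) :
    g • y = g' • y := by
  have hx : g⁻¹ * g' ∈ stabilizer G x := by
    rw [mem_stabilizer_iff, mul_smul, ← h, inv_smul_smul]
  rw [← mul_inv_cancel_left g g', mul_smul, mem_stabilizer_iff.1 (hxy hx)]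

theorem MulAction.exists_equivariant_lift {A : Type*} [MulAction G A] (π : Y → A)
    (hπ : ∀ (g : G) (y : Y), π (g • y) = g • π y) (f : X → A)
    (hf : ∀ (g : G) (x : X), f (g • x) = g • f x)
    (hlift : ∀ x, ∃ y, stabilizer G x ≤ stabilizer G y ∧ π y = f x) :
    ∃ c : X → Y, (∀ (g : G) (x : X), c (g • x) = g • c x) ∧ ∀ x, π (c x) = f x := by
  choose y hystab hyπ using hlift
  let r : X → X := fun x => (Quotient.mk (orbitRel G X) x).out
  have hr : ∀ (g : G) (x : X), r (g • x) = r x := fun g x =>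
    congrArg Quotient.out (Quotient.sound (mem_orbit x g))
  have ht : ∀ x, ∃ t : G, t • r x = x := fun x =>
    orbitRel_apply.1 (Quotient.exact (Quotient.out_eq (Quotient.mk (orbitRel G X) x)).symm)
  choose t ht using ht
  refine ⟨fun x => t x • y (r x), fun g x => ?_, fun x => ?_⟩
  · have h : t (g • x) • r x = (g * t x) • r x := by rw [← hr g, ht, mul_smul, hr, ht]
    simp only [hr, smul_eq_smul_of_stabilizer_le (hystab (r x)) h, mul_smul]
  · rw [hπ, hyπ, ← hf, ht]

variable [TopologicalSpace G] [IsTopologicalGroup G]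

theorem isLocallyConstant_smul_of_isOpen_stabilizer {x : X}
    (hx : IsOpen (stabilizer G x : Set G)) : IsLocallyConstant fun g : G => g • x := by
  refine (IsLocallyConstant.iff_exists_open _).2 fun g => ⟨g • (stabilizer G x : Set G),
    hx.smul g, ⟨1, one_mem _, mul_one g⟩, fun g' hg' => ?_⟩
  obtain ⟨s, hs, rfl⟩ := hg'
  simp only [smul_eq_mul, mul_smul, mem_stabilizer_iff.1 hs]

theorem MulAction.finite_orbit_of_isCompact {K : Subgroup G} (hK : IsCompact (K : Set G))
    {x : X} (hx : IsOpen (stabilizer G x : Set G)) : (orbit K x).Finite := by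
  have : CompactSpace K := isCompact_iff_compactSpace.1 hK
  exact ((isLocallyConstant_smul_of_isOpen_stabilizer hx).comp_continuous
    continuous_subtype_val).range_finite

theorem isOpen_isCompact_stabilizer_quotient {H : Subgroup G} (hHo : IsOpen (H : Set G))
    (hHc : IsCompact (H : Set G)) (x : G ⧸ H) :
    IsOpen (stabilizer G x : Set G) ∧ IsCompact (stabilizer G x : Set G) := by
  induction x using QuotientGroup.induction_on with
  | H g =>
    let conj := (Homeomorph.mulLeft g).trans (Homeomorph.mulRight g⁻¹)
    have : (stabilizer G (g : G ⧸ H) : Set G) = conj '' H := by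
      have hg : (g : G ⧸ H) = g • ((1 : G) : G ⧸ H) := by simp
      rw [hg, stabilizer_smul_eq_stabilizer_map_conj, stabilizer_quotient, Subgroup.coe_map]
      rfl
    rw [this]
    exact ⟨conj.isOpenMap _ hHo, hHc.image conj.continuous⟩

end GroupAction

theorem exists_stabilizer_le_preimage_of_finite_orbit {G k A B : Type*} [Group G] [Field k]
    [CharZero k] [AddCommGroup A] [Module k A] [DistribMulAction G A]
    [AddCommGroup B] [Module k B] [DistribMulAction G B] [SMulCommClass G k B]
    (π : B →ₗ[k] A) (hπ : ∀ (g : G) (b : B), π (g • b) = g • π b) {K : Subgroup G} {a : A}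
    (ha : K ≤ stabilizer G a) {b₀ : B} (hb₀ : π b₀ = a) (hfin : (orbit K b₀).Finite) :
    ∃ b : B, K ≤ stabilizer G b ∧ π b = a := by
  have : Fintype (orbit K b₀) := hfin.fintype
  have : Nonempty (orbit K b₀) := ⟨⟨b₀, mem_orbit_self b₀⟩⟩
  refine ⟨(Fintype.card (orbit K b₀) : k)⁻¹ • ∑ y : orbit K b₀, (y : B), fun t ht => ?_, ?_⟩
  · rw [mem_stabilizer_iff, smul_comm, Finset.smul_sum]
    congr 1
    exact Equiv.sum_comp (toPerm (⟨t, ht⟩ : K)) (fun y : orbit K b₀ => (y : B))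
  · have hy : ∀ y : orbit K b₀, π y = a := by
      rintro ⟨_, t, rfl⟩
      exact (hπ t b₀).trans (hb₀ ▸ ha t.2)
    simp only [map_smul, map_sum, hy, Finset.sum_const, Finset.card_univ,
      ← Nat.cast_smul_eq_nsmul k, smul_smul]
    rw [inv_mul_cancel₀ (Nat.cast_ne_zero.2 Fintype.card_ne_zero), one_smul]

theorem Finsupp.linearCombination_mapDomain_smul {G k X M : Type*} [Monoid G] [Semiring k]
    [AddCommMonoid M] [Module k M] [MulAction G X] [DistribMulAction G M] [SMulCommClass G k M]
    {c : X → M} (hc : ∀ (g : G) (x : X), c (g • x) = g • c x) (g : G) (f : X →₀ k) :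
    linearCombination k c (mapDomain (g • ·) f) = g • linearCombination k c f := by
  have : c ∘ (g • ·) = DistribSMul.toLinearMap k M g ∘ c := funext (hc g)
  rw [linearCombination_mapDomain, this, ← apply_linearCombination]
  rfl

theorem projOverDiscrete_finsupp {G : Type u} [Group G] [TopologicalSpace G]
    [IsTopologicalGroup G] {Ω : Type u} [MulAction G Ω]
    (hΩ : ∀ ω : Ω, IsCompact (stabilizer G ω : Set G)) :
    ProjOverDiscrete G (Ω →₀ ℚ) (fun g f => Finsupp.mapDomain (fun ω : Ω => g • ω) f) := by
  intro A B π hπ hsurj φ hφ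
  have hf : ∀ (g : G) (ω : Ω), φ (Finsupp.single (g • ω) 1) = g • φ (Finsupp.single ω 1) :=
    fun g ω => by simpa only [Finsupp.mapDomain_single] using hφ g (Finsupp.single ω 1)
  have hlift : ∀ ω : Ω, ∃ b : B.carrier,
      stabilizer G ω ≤ stabilizer G b ∧ π b = φ (Finsupp.single ω 1) := by
    intro ω
    obtain ⟨b₀, hb₀⟩ := hsurj (φ (Finsupp.single ω 1))
    exact exists_stabilizer_le_preimage_of_finite_orbit π hπ
      (fun g hg => (hf g ω).symm.trans (by rw [mem_stabilizer_iff.1 hg])) hb₀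
      (finite_orbit_of_isCompact (hΩ ω) (B.discrete b₀))
  obtain ⟨c, hc, hπc⟩ := exists_equivariant_lift π hπ _ hf hlift
  refine ⟨Finsupp.linearCombination ℚ c, Finsupp.linearCombination_mapDomain_smul hc, ?_⟩
  ext ω
  simp [hπc]

theorem exists_equivariant_surjective_finsupp_sigma {G k M : Type*} [Group G] [Semiring k]
    [AddCommMonoid M] [Module k M] [DistribMulAction G M] [SMulCommClass G k M]
    (U : M → Subgroup G) (hU : ∀ m, U m ≤ stabilizer G m) :
    ∃ π : ((Σ m, G ⧸ U m) →₀ k) →ₗ[k] M,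
      (∀ (g : G) (f : (Σ m, G ⧸ U m) →₀ k), π (Finsupp.mapDomain (g • ·) f) = g • π f) ∧
      Function.Surjective π := by
  let e : (Σ m, G ⧸ U m) → M := fun x => Quotient.liftOn' x.2 (· • x.1) fun g g' h =>
    smul_eq_smul_of_stabilizer_le ((stabilizer_quotient (U x.1)).trans_le (hU x.1))
      (x := ((1 : G) : G ⧸ U x.1)) (y := x.1) (by simpa using Quotient.sound' h)
  have he : ∀ (g : G) (x : Σ m, G ⧸ U m), e (g • x) = g • e x := by
    rintro g ⟨m, x⟩
    induction x using QuotientGroup.induction_on with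
    | H h => exact mul_smul g h m
  refine ⟨Finsupp.linearCombination k e, Finsupp.linearCombination_mapDomain_smul he,
    fun m => ⟨Finsupp.single ⟨m, ((1 : G) : G ⧸ U m)⟩ 1, ?_⟩⟩
  simp [e]

/-- Let `G` be a t.d.l.c. group and `Ω` a discrete left `G`-set
with compact (open) stabilizers.  Then the permutation module `ℚ[Ω]` is projective
in the category of discrete `ℚ[G]`-modules, and consequently this category has
enough projectives: every discrete `ℚ[G]`-module is an equivariant quotient of
such a permutation module. -/
theorem permutation_module_projective (G : Type u) [Group G] [TopologicalSpace G]
    [IsTopologicalGroup G] [TotallyDisconnectedSpace G] [LocallyCompactSpace G]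
    (Ω : Type u) [MulAction G Ω]
    (hΩ : ∀ ω : Ω, IsOpen ((MulAction.stabilizer G ω : Subgroup G) : Set G) ∧
      IsCompact ((MulAction.stabilizer G ω : Subgroup G) : Set G)) :
    ProjOverDiscrete G (Ω →₀ ℚ) (fun g f => Finsupp.mapDomain (fun ω : Ω => g • ω) f) ∧
    ∀ M : DiscGMod G, ∃ (Ω' : Type u) (a : G → Ω' → Ω'),
      (∀ ω, a 1 ω = ω) ∧ (∀ g h ω, a (g * h) ω = a g (a h ω)) ∧
      (∀ ω : Ω', IsOpen {g : G | a g ω = ω} ∧ IsCompact {g : G | a g ω = ω}) ∧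
      ∃ π : (Ω' →₀ ℚ) →ₗ[ℚ] M.carrier,
        (∀ (g : G) (f : Ω' →₀ ℚ), π (Finsupp.mapDomain (a g) f) = g • π f) ∧
        Function.Surjective π := by
  refine ⟨projOverDiscrete_finsupp fun ω => (hΩ ω).2, fun M => ?_⟩
  choose U hUo hUc hUle using fun m : M.carrier =>
    exists_isOpen_isCompact_subgroup_subset ((M.discrete m).mem_nhds (one_mem _))
  obtain ⟨π, hπ, hsurj⟩ := exists_equivariant_surjective_finsupp_sigma (k := ℚ) U hUle
  refine ⟨Σ m, G ⧸ U m, (· • ·), one_smul G, mul_smul, ?_, π, hπ, hsurj⟩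
  rintro ⟨m, x⟩
  have : {g : G | g • (⟨m, x⟩ : Σ m, G ⧸ U m) = ⟨m, x⟩} = stabilizer G x := by
    ext g
    simp [Sigma.smul_mk]
  rw [this]
  exact isOpen_isCompact_stabilizer_quotient (hUo m) (hUc m) x
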